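/- arXiv:1205.6527 — 3 statements merged into one kernel-verified Lean document; each statement's English description precedes it below -/
import Mathlib

section
/- Passivation of a single static assignment: let x : V, let e : (V → ℤ) → ℤ be an expression that does not read x (i.e., ∀ s v, e (Function.update s x v) = e s), and let S be any statement. Then seq (assign x e) S has a feasible execution if and only if seq (assume (fun t => t x = e t)) S has a feasible execution; i.e., (∃ s s', exec (seq (assign x e) S) s s') ↔ (∃ s s', exec (seq (assume (fun t => t x = e t)) S) s s'). -/
inductive Stmt (V : Type*) where
  | assume (P : (V → ℤ) → Prop)
  | assign (x : V) (e : (V → ℤ) → ℤ)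
  | seq (S T : Stmt V)

variable {V : Type*} [DecidableEq V]

def exec : Stmt V → (V → ℤ) → (V → ℤ) → Prop
  | .assume P, s, s' => P s ∧ s' = s
  | .assign x e, s, s' => s' = Function.update s x (e s)
  | .seq S T, s, s'' => ∃ s', exec S s s' ∧ exec T s' s''

def wlp : Stmt V → ((V → ℤ) → Prop) → (V → ℤ) → Prop
  | .assume P, Q, s => P s → Q s
  | .assign x e, Q, s => Q (Function.update s x (e s))
  | .seq S T, Q, s => wlp S (wlp T Q) s

theorem passivation_correct (x : V) (e : (V → ℤ) → ℤ)
    (he : ∀ (s : V → ℤ) (v : ℤ), e (Function.update s x v) = e s) (S : Stmt V) :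
    (∃ s s', exec (Stmt.seq (Stmt.assign x e) S) s s') ↔
      (∃ s s', exec (Stmt.seq (Stmt.assume (fun t => t x = e t)) S) s s') := by
  constructor
  · rintro ⟨s, s'', t, ht, hT⟩
    refine ⟨t, s'', t, ⟨?_, rfl⟩, hT⟩
    subst ht
    simp [he]
  · rintro ⟨s, s'', t, ⟨hP, ht⟩, hT⟩
    subst ht
    refine ⟨t, s'', t, ?_, hT⟩
    show t = Function.update t x (e t)
    rw [← hP]
    simp
end

section
/- Characterization of the block (termination) variables of the verification condition: let V be a finite type, succ : V → V → Prop an acyclic relation (∀ u v, succ u v → ¬ Relation.ReflTransGen succ v u), and f : V a final block with no successors (¬ ∃ w, succ f w) such that every block without successors equals f (∀ v, (¬ ∃ w, succ v w) → v = f). Suppose B : V → Prop satisfies B f, and for every v ≠ f, B v ↔ ∃ w, succ v w ∧ B w. Then for every v, B v holds if and only if Relation.ReflTransGen succ v f, i.e., iff there is a path from v to the final block. -/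
theorem block_variables_characterize_termination
    {V : Type*} [Fintype V] (succ : V → V → Prop)
    (hacyc : ∀ u v, succ u v → ¬ Relation.ReflTransGen succ v u)
    (f : V) (hf : ¬ ∃ w, succ f w)
    (hfu : ∀ v, (¬ ∃ w, succ v w) → v = f)
    (B : V → Prop) (hBf : B f)
    (hB : ∀ v, v ≠ f → (B v ↔ ∃ w, succ v w ∧ B w)) :
    ∀ v, B v ↔ Relation.ReflTransGen succ v f := by
  set r : V → V → Prop := fun a b => succ b a with hr
  have irr : ∀ x, ¬ Relation.TransGen r x x := by
    intro x hx
    obtain ⟨c, hc, hcx⟩ := Relation.TransGen.head'_iff.mp hx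
    exact hacyc c x hc (Relation.reflTransGen_swap.mpr hcx)
  haveI : IsIrrefl V (Relation.TransGen r) := ⟨irr⟩
  haveI : IsTrans V (Relation.TransGen r) := ⟨fun _ _ _ h h' => h.trans h'⟩
  have wfT : WellFounded (Relation.TransGen r) :=
    Finite.wellFounded_of_trans_of_irrefl _
  have wf : WellFounded r := Subrelation.wf (fun h => Relation.TransGen.single h) wfT
  have key : ∀ v, Relation.ReflTransGen succ v f ∧ B v := by
    intro v
    induction v using WellFounded.induction wf with
    | _ x ih =>
      by_cases hx : x = f
      · subst hx; exact ⟨Relation.ReflTransGen.refl, hBf⟩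
      · have hex : ∃ w, succ x w := by
          by_contra h; exact hx (hfu x h)
        obtain ⟨w, hw⟩ := hex
        obtain ⟨hpath, hBw⟩ := ih w hw
        exact ⟨Relation.ReflTransGen.head hw hpath, (hB x hx).2 ⟨w, hw, hBw⟩⟩
  intro v
  exact ⟨fun _ => (key v).1, fun _ => (key v).2⟩
end

section
/- Characterization of the reachability variables of the reachability verification condition: let V be a finite type, succ : V → V → Prop an acyclic relation (∀ u v, succ u v → ¬ Relation.ReflTransGen succ v u), f : V a final block with no successors such that every block without successors equals f, and v₀ : V an initial block with no predecessors (¬ ∃ u, succ u v₀). Suppose B : V → Prop satisfies B f and, for every v ≠ f, B v ↔ ∃ w, succ v w ∧ B w; and suppose R : V → Prop satisfies R v₀ ↔ B v₀ and, for every v ≠ v₀, R v ↔ (B v ∧ ∃ u, succ u v ∧ R u). Then for every v, R v holds if and only if both Relation.ReflTransGen succ v₀ v and Relation.ReflTransGen succ v f hold; i.e., R_v is true exactly when v lies on a complete path from the initial block to the final block. -/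
theorem reachability_variables_characterize_complete_paths
    {V : Type*} [Fintype V] (succ : V → V → Prop)
    (hacyc : ∀ u v, succ u v → ¬ Relation.ReflTransGen succ v u)
    (f : V) (hf : ¬ ∃ w, succ f w)
    (hfu : ∀ v, (¬ ∃ w, succ v w) → v = f)
    (v₀ : V) (hv₀ : ¬ ∃ u, succ u v₀)
    (B : V → Prop) (hBf : B f)
    (hB : ∀ v, v ≠ f → (B v ↔ ∃ w, succ v w ∧ B w))
    (R : V → Prop) (hR₀ : R v₀ ↔ B v₀)
    (hR : ∀ v, v ≠ v₀ → (R v ↔ (B v ∧ ∃ u, succ u v ∧ R u))) :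
    ∀ v, R v ↔ (Relation.ReflTransGen succ v₀ v ∧ Relation.ReflTransGen succ v f) := by
  have hirr : ∀ v, ¬ Relation.TransGen succ v v := by
    intro v h
    obtain ⟨c, hc, hcv⟩ := Relation.TransGen.head'_iff.mp h
    exact hacyc v c hc hcv
  have wfF : WellFounded (fun a b => succ b a) := by
    have hwf : WellFounded (fun a b => Relation.TransGen succ b a) := by
      haveI : IsTrans V (fun a b => Relation.TransGen succ b a) :=
        ⟨fun a b c h1 h2 => h2.trans h1⟩
      haveI : IsIrrefl V (fun a b => Relation.TransGen succ b a) := ⟨fun a => hirr a⟩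
      exact Finite.wellFounded_of_trans_of_irrefl _
    exact Subrelation.wf (fun h => Relation.TransGen.single h) hwf
  have wfB : WellFounded succ := by
    have hwf : WellFounded (Relation.TransGen succ) := by
      haveI : IsTrans V (Relation.TransGen succ) := ⟨fun _ _ _ => Relation.TransGen.trans⟩
      haveI : IsIrrefl V (Relation.TransGen succ) := ⟨hirr⟩
      exact Finite.wellFounded_of_trans_of_irrefl _
    exact Subrelation.wf (fun h => Relation.TransGen.single h) hwf
  have hBchar : ∀ v, B v ↔ Relation.ReflTransGen succ v f := by
    intro v
    constructor
    · induction v using wfF.induction with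
      | _ v ih =>
        intro hBv
        by_cases hvf : v = f
        · subst hvf; exact Relation.ReflTransGen.refl
        · obtain ⟨w, hvw, hBw⟩ := (hB v hvf).mp hBv
          exact Relation.ReflTransGen.head hvw (ih w hvw hBw)
    · intro hp
      induction hp using Relation.ReflTransGen.head_induction_on with
      | refl => exact hBf
      | head h hp ih =>
        exact (hB _ (fun he => hf ⟨_, he ▸ h⟩)).mpr ⟨_, h, ih⟩
  have hRfwd : ∀ v, R v → Relation.ReflTransGen succ v₀ v ∧ B v := by
    intro v
    induction v using wfB.induction with
    | _ v ih =>
      intro hRv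
      by_cases hv : v = v₀
      · subst hv; exact ⟨Relation.ReflTransGen.refl, hR₀.mp hRv⟩
      · obtain ⟨hBv, u, huv, hRu⟩ := (hR v hv).mp hRv
        exact ⟨(ih u huv hRu).1.tail huv, hBv⟩
  have hRbwd : ∀ v, Relation.ReflTransGen succ v₀ v → Relation.ReflTransGen succ v f → R v := by
    intro v hp
    induction hp with
    | refl => intro hpf; exact hR₀.mpr ((hBchar v₀).mpr hpf)
    | tail hp' step ih =>
      intro hpf
      rename_i b c
      have hc : c ≠ v₀ := fun he => hv₀ ⟨b, he ▸ step⟩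
      exact (hR c hc).mpr ⟨(hBchar c).mpr hpf, b, step,
        ih (Relation.ReflTransGen.head step hpf)⟩
  intro v
  constructor
  · intro hRv
    obtain ⟨h1, h2⟩ := hRfwd v hRv
    exact ⟨h1, (hBchar v).mp h2⟩
  · rintro ⟨h1, h2⟩
    exact hRbwd v h1 h2
end
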